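/- arXiv:1802.03337 — 2 statements merged into one kernel-verified Lean document; each statement's English description precedes it below -/
import Mathlib

section
/- Let S ∈ ℝ^{s×n} satisfy the subspace embedding property: for all x ∈ ℝ^d, (1−δ)‖Ax‖₂ ≤ ‖SAx‖₂ ≤ (1+δ)‖Ax‖₂ for some 0 < δ < 1, where A ∈ ℝ^{n×d} has rank d. Let SA = QR be a QR-decomposition with Q having orthonormal columns and R ∈ ℝ^{d×d} invertible. Then U = AR^{-1} satisfies: for all y ∈ ℝ^d, (1/(1+δ))‖y‖₂ ≤ ‖Uy‖₂ ≤ (1/(1−δ))‖y‖₂. -/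
open scoped BigOperators Matrix

/-- Euclidean norm of a vector in `ℝ^n`. -/
noncomputable def vecEnorm {n : ℕ} (v : Fin n → ℝ) : ℝ := Real.sqrt (∑ i, (v i) ^ 2)

/-- Frobenius norm of a matrix. -/
noncomputable def fnorm {n d : ℕ} (M : Matrix (Fin n) (Fin d) ℝ) : ℝ :=
  Real.sqrt (∑ i, ∑ j, (M i j) ^ 2)

/-! With `SA = QR`, the change of variables `x = R⁻¹y` gives `SAx = Qy`, and a matrix with
orthonormal columns is an isometry, so `‖SAx‖ = ‖y‖` while `AR⁻¹y = Ax`. The embedding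
inequalities for this `x` then read `(1 - δ)‖Uy‖ ≤ ‖y‖ ≤ (1 + δ)‖Uy‖`. -/

lemma vecEnorm_eq_sqrt_dotProduct {n : ℕ} (v : Fin n → ℝ) : vecEnorm v = Real.sqrt (v ⬝ᵥ v) := by
  simp only [vecEnorm, dotProduct, sq]

lemma vecEnorm_mulVec_of_transpose_mul_self_eq_one {m k : ℕ} (Q : Matrix (Fin m) (Fin k) ℝ)
    (hQ : Qᵀ * Q = 1) (y : Fin k → ℝ) : vecEnorm (Q *ᵥ y) = vecEnorm y := by
  rw [vecEnorm_eq_sqrt_dotProduct, vecEnorm_eq_sqrt_dotProduct, Matrix.dotProduct_mulVec,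
    ← Matrix.mulVec_transpose, Matrix.mulVec_mulVec, hQ, Matrix.one_mulVec]

lemma Matrix.mulVec_inv_mulVec_of_eq_mul {l m α : Type*} [Fintype m] [DecidableEq m]
    [CommRing α] {B Q : Matrix l m α} {R : Matrix m m α} (hB : B = Q * R) (hR : IsUnit R.det)
    (y : m → α) : B *ᵥ (R⁻¹ *ᵥ y) = Q *ᵥ y := by
  rw [hB, Matrix.mulVec_mulVec, Matrix.mul_assoc, Matrix.mul_nonsing_inv R hR, Matrix.mul_one]

theorem preconditioned_basis_norm_bounds_general {n d s : ℕ}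
    (A : Matrix (Fin n) (Fin d) ℝ)
    (S : Matrix (Fin s) (Fin n) ℝ) (δ : ℝ) (hδ0 : 0 < δ) (hδ1 : δ < 1)
    (hembed : ∀ x : Fin d → ℝ,
      (1 - δ) * vecEnorm (A.mulVec x) ≤ vecEnorm ((S * A).mulVec x) ∧
      vecEnorm ((S * A).mulVec x) ≤ (1 + δ) * vecEnorm (A.mulVec x))
    (Q : Matrix (Fin s) (Fin d) ℝ) (R : Matrix (Fin d) (Fin d) ℝ)
    (hQ : Qᵀ * Q = 1) (hR : IsUnit R.det) (hQR : S * A = Q * R) :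
    ∀ y : Fin d → ℝ,
      (1 / (1 + δ)) * vecEnorm y ≤ vecEnorm ((A * R⁻¹).mulVec y) ∧
      vecEnorm ((A * R⁻¹).mulVec y) ≤ (1 / (1 - δ)) * vecEnorm y := by
  intro y
  have hSA : vecEnorm ((S * A) *ᵥ (R⁻¹ *ᵥ y)) = vecEnorm y := by
    rw [Matrix.mulVec_inv_mulVec_of_eq_mul hQR hR,
      vecEnorm_mulVec_of_transpose_mul_self_eq_one Q hQ]
  obtain ⟨hlower, hupper⟩ := hembed (R⁻¹ *ᵥ y)
  rw [hSA] at hlower hupper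
  rw [← Matrix.mulVec_mulVec]
  constructor
  · rw [one_div_mul_eq_div, div_le_iff₀ (by linarith)]
    linarith
  · rw [one_div_mul_eq_div, le_div_iff₀ (by linarith)]
    linarith

/-- if `S` is a subspace embedding for the column space of `A`
(with distortion `δ`), `A` has rank `d`, and `SA = QR` with `QᵀQ = I` and `R`
invertible, then `U = AR⁻¹` satisfies
`(1/(1+δ))‖y‖ ≤ ‖Uy‖ ≤ (1/(1−δ))‖y‖` for all `y`. -/
theorem preconditioned_basis_norm_bounds {n d s : ℕ}
    (A : Matrix (Fin n) (Fin d) ℝ) (hA : A.rank = d)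
    (S : Matrix (Fin s) (Fin n) ℝ) (δ : ℝ) (hδ0 : 0 < δ) (hδ1 : δ < 1)
    (hembed : ∀ x : Fin d → ℝ,
      (1 - δ) * vecEnorm (A.mulVec x) ≤ vecEnorm ((S * A).mulVec x) ∧
      vecEnorm ((S * A).mulVec x) ≤ (1 + δ) * vecEnorm (A.mulVec x))
    (Q : Matrix (Fin s) (Fin d) ℝ) (R : Matrix (Fin d) (Fin d) ℝ)
    (hQ : Qᵀ * Q = 1) (hR : IsUnit R.det) (hQR : S * A = Q * R) :
    ∀ y : Fin d → ℝ,
      (1 / (1 + δ)) * vecEnorm y ≤ vecEnorm ((A * R⁻¹).mulVec y) ∧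
      vecEnorm ((A * R⁻¹).mulVec y) ≤ (1 / (1 - δ)) * vecEnorm y :=
  preconditioned_basis_norm_bounds_general A S δ hδ0 hδ1 hembed Q R hQ hR hQR
end

section
/- Under the hypotheses of the previous statement, the matrix U = AR^{-1} is ((1+δ)/(1−δ) · √d, 1+δ, 2)-conditioned: ‖U‖_F ≤ √d/(1−δ) and σ_min(U) ≥ 1/(1+δ). -/
open scoped BigOperators Matrix

/-- Euclidean norm of a vector in `ℝ^n`. -/
noncomputable def enorm {n : ℕ} (v : Fin n → ℝ) : ℝ := Real.sqrt (∑ i, (v i) ^ 2)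

/-!
Put `U = A R⁻¹`. Since `S A R⁻¹ = Q` and `Q` has orthonormal columns, `‖S U x‖ = ‖x‖`, so the
subspace embedding property of `S`, applied to `R⁻¹ x`, reads
`(1 - δ) ‖U x‖ ≤ ‖x‖ ≤ (1 + δ) ‖U x‖`. The right inequality is the bound on `σ_min(U)`; the left
one bounds every column `U eⱼ` by `1 / (1 - δ)`, and summing over the `d` columns bounds `‖U‖_F`.
-/

open Matrix

lemma enorm_sq {n : ℕ} (v : Fin n → ℝ) : _root_.enorm v ^ 2 = v ⬝ᵥ v := by
  rw [_root_.enorm, Real.sq_sqrt (Finset.sum_nonneg fun i _ => sq_nonneg _)]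
  simp only [dotProduct, sq]

lemma enorm_mulVec_of_transpose_mul_self_eq_one {s d : ℕ} {Q : Matrix (Fin s) (Fin d) ℝ}
    (hQ : Qᵀ * Q = 1) (v : Fin d → ℝ) : _root_.enorm (Q *ᵥ v) = _root_.enorm v := by
  have hsq : _root_.enorm (Q *ᵥ v) ^ 2 = _root_.enorm v ^ 2 := by
    rw [enorm_sq, enorm_sq, dotProduct_mulVec, ← mulVec_transpose, mulVec_mulVec, hQ,
      one_mulVec]
  exact (sq_eq_sq₀ (Real.sqrt_nonneg _) (Real.sqrt_nonneg _)).mp hsq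

lemma enorm_single_one {d : ℕ} (j : Fin d) : _root_.enorm (Pi.single j (1 : ℝ)) = 1 := by
  simp [_root_.enorm, Pi.single_apply]

lemma fnorm_sq {n d : ℕ} (M : Matrix (Fin n) (Fin d) ℝ) :
    fnorm M ^ 2 = ∑ j, _root_.enorm (M *ᵥ Pi.single j 1) ^ 2 := by
  rw [fnorm, Real.sq_sqrt (by positivity), Finset.sum_comm]
  refine Finset.sum_congr rfl fun j _ => ?_
  rw [enorm_sq, mulVec_single_one]
  simp only [dotProduct, col_apply, sq]

lemma fnorm_le_sqrt_card_div {n d : ℕ} {M : Matrix (Fin n) (Fin d) ℝ} {c : ℝ} (hc : 0 < c)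
    (hM : ∀ x, c * _root_.enorm (M *ᵥ x) ≤ _root_.enorm x) : fnorm M ≤ Real.sqrt d / c := by
  have hcol : ∀ j, _root_.enorm (M *ᵥ Pi.single j 1) ^ 2 ≤ (1 / c) ^ 2 := fun j => by
    have h := hM (Pi.single j 1)
    rw [enorm_single_one] at h
    exact pow_le_pow_left₀ (Real.sqrt_nonneg _) ((le_div_iff₀' hc).mpr h) 2
  have hsum : fnorm M ^ 2 ≤ (Real.sqrt d / c) ^ 2 := calc
    fnorm M ^ 2 ≤ ∑ _j : Fin d, (1 / c) ^ 2 := by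
      rw [fnorm_sq]
      exact Finset.sum_le_sum fun j _ => hcol j
    _ = (Real.sqrt d / c) ^ 2 := by
      rw [div_pow, div_pow, Real.sq_sqrt d.cast_nonneg]
      simp [div_eq_mul_inv]
  exact (pow_le_pow_iff_left₀ (Real.sqrt_nonneg _) (by positivity) two_ne_zero).mp hsum

lemma enorm_mulVec_nonsing_inv_mulVec_of_eq_mul {s d : ℕ} {M : Matrix (Fin s) (Fin d) ℝ}
    {Q : Matrix (Fin s) (Fin d) ℝ} {R : Matrix (Fin d) (Fin d) ℝ} (hQ : Qᵀ * Q = 1)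
    (hR : IsUnit R.det) (hQR : M = Q * R) (x : Fin d → ℝ) :
    _root_.enorm (M *ᵥ (R⁻¹ *ᵥ x)) = _root_.enorm x := by
  rw [hQR, mulVec_mulVec, Matrix.mul_assoc, mul_nonsing_inv R hR, Matrix.mul_one,
    enorm_mulVec_of_transpose_mul_self_eq_one hQ]

theorem preconditioned_basis_isConditioned_general {n d s : ℕ}
    (A : Matrix (Fin n) (Fin d) ℝ)
    (S : Matrix (Fin s) (Fin n) ℝ) (δ : ℝ) (hδ0 : 0 < δ) (hδ1 : δ < 1)
    (hembed : ∀ x : Fin d → ℝ,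
      (1 - δ) * _root_.enorm (A.mulVec x) ≤ _root_.enorm ((S * A).mulVec x) ∧
      _root_.enorm ((S * A).mulVec x) ≤ (1 + δ) * _root_.enorm (A.mulVec x))
    (Q : Matrix (Fin s) (Fin d) ℝ) (R : Matrix (Fin d) (Fin d) ℝ)
    (hQ : Qᵀ * Q = 1) (hR : IsUnit R.det) (hQR : S * A = Q * R) :
    fnorm (A * R⁻¹) ≤ Real.sqrt d / (1 - δ) ∧
    ∀ x : Fin d → ℝ, (1 / (1 + δ)) * _root_.enorm x ≤ _root_.enorm ((A * R⁻¹).mulVec x) := by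
  have hU : ∀ x, (1 - δ) * _root_.enorm ((A * R⁻¹) *ᵥ x) ≤ _root_.enorm x ∧
      _root_.enorm x ≤ (1 + δ) * _root_.enorm ((A * R⁻¹) *ᵥ x) := fun x => by
    have h := hembed (R⁻¹ *ᵥ x)
    rwa [enorm_mulVec_nonsing_inv_mulVec_of_eq_mul hQ hR hQR, mulVec_mulVec] at h
  refine ⟨fnorm_le_sqrt_card_div (by linarith) fun x => (hU x).1, fun x => ?_⟩
  rw [one_div_mul_eq_div, div_le_iff₀' (by linarith)]
  exact (hU x).2

/-- under the hypotheses of Statement 1, `U = AR⁻¹` is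
`((1+δ)/(1−δ)·√d, 1+δ, 2)`-conditioned: `‖U‖_F ≤ √d/(1−δ)` and
`σ_min(U) ≥ 1/(1+δ)` (i.e. `(1+δ)‖Ux‖ ≥ ‖x‖` for all `x`). -/
theorem preconditioned_basis_isConditioned {n d s : ℕ}
    (A : Matrix (Fin n) (Fin d) ℝ) (hA : A.rank = d)
    (S : Matrix (Fin s) (Fin n) ℝ) (δ : ℝ) (hδ0 : 0 < δ) (hδ1 : δ < 1)
    (hembed : ∀ x : Fin d → ℝ,
      (1 - δ) * _root_.enorm (A.mulVec x) ≤ _root_.enorm ((S * A).mulVec x) ∧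
      _root_.enorm ((S * A).mulVec x) ≤ (1 + δ) * _root_.enorm (A.mulVec x))
    (Q : Matrix (Fin s) (Fin d) ℝ) (R : Matrix (Fin d) (Fin d) ℝ)
    (hQ : Qᵀ * Q = 1) (hR : IsUnit R.det) (hQR : S * A = Q * R) :
    fnorm (A * R⁻¹) ≤ Real.sqrt d / (1 - δ) ∧
    ∀ x : Fin d → ℝ, (1 / (1 + δ)) * _root_.enorm x ≤ _root_.enorm ((A * R⁻¹).mulVec x) :=
  preconditioned_basis_isConditioned_general A S δ hδ0 hδ1 hembed Q R hQ hR hQR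
end
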